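/- arXiv:1006.1405 — 7 statements merged into one kernel-verified Lean document; each statement's English description precedes it below -/
import Mathlib

section
/- Let G = (V, E, w) be a finite weighted directed graph with integer weights in which every cycle has strictly negative weight. Then for every infinite path (v₀, v₁, v₂, …) in G, the weights of its prefixes are not bounded from below; that is, for every M ∈ ℤ there exists n ∈ ℕ such that Σ_{i=0}^{n-1} w(v_i, v_{i+1}) < M. -/
/-!
Some vertex `v` is visited infinitely often by the path. Between two visits of `v` the path
traverses a cycle, whose weight is negative, so the prefix weights at the successive visits of `v`
form a strictly decreasing sequence of integers, which is unbounded from below.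
-/

open Filter Finset

theorem StrictAnti.exists_lt {f : ℕ → ℤ} (hf : StrictAnti f) (M : ℤ) : ∃ n, f n < M := by
  have hdrop : ∀ n : ℕ, f n + n ≤ f 0 := by
    intro n
    induction n with
    | zero => simp
    | succ n ih => have := hf (Nat.lt_add_one n); push_cast; omega
  refine ⟨(f 0 - M + 1).toNat, ?_⟩
  have := hdrop (f 0 - M + 1).toNat
  have := Int.self_le_toNat (f 0 - M + 1)
  omega

section PathWeight

variable {V : Type*} (w : V → V → ℤ)

def pathWeight (p : ℕ → V) (n : ℕ) : ℤ := ∑ i ∈ range n, w (p i) (p (i + 1))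

theorem pathWeight_add (p : ℕ → V) (n k : ℕ) :
    pathWeight w p (n + k) = pathWeight w p n + pathWeight w (fun i => p (n + i)) k := by
  simp only [pathWeight, sum_range_add, Nat.add_assoc]

variable {w} {E : V → V → Prop}

theorem pathWeight_lt_of_eq
    (hneg : ∀ (k : ℕ) (u : ℕ → V), 1 ≤ k → (∀ i < k, E (u i) (u (i + 1))) →
      u k = u 0 → ∑ i ∈ range k, w (u i) (u (i + 1)) < 0)
    {p : ℕ → V} (hp : ∀ i, E (p i) (p (i + 1))) {n m : ℕ} (hnm : n < m) (hpnm : p n = p m) :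
    pathWeight w p m < pathWeight w p n := by
  obtain ⟨k, rfl⟩ := Nat.exists_eq_add_of_le hnm.le
  have hcycle : pathWeight w (fun i => p (n + i)) k < 0 :=
    hneg k (fun i => p (n + i)) (by omega) (fun i _ => hp (n + i)) hpnm.symm
  rw [pathWeight_add]
  omega

end PathWeight

/-- if every cycle of a finite graph has strictly negative weight,
then the prefix sums of every infinite path are unbounded from below. -/
theorem stmt_4 {V : Type*} [Fintype V] (E : V → V → Prop) (w : V → V → ℤ)
    (hneg : ∀ (k : ℕ) (u : ℕ → V), 1 ≤ k → (∀ i < k, E (u i) (u (i + 1))) →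
      u k = u 0 → ∑ i ∈ Finset.range k, w (u i) (u (i + 1)) < 0)
    (p : ℕ → V) (hp : ∀ i, E (p i) (p (i + 1))) (M : ℤ) :
    ∃ n : ℕ, ∑ i ∈ Finset.range n, w (p i) (p (i + 1)) < M := by
  obtain ⟨v, hv⟩ := Finite.exists_infinite_fiber p
  obtain ⟨φ, hφ, hφv⟩ := extraction_of_frequently_atTop
    (Nat.frequently_atTop_iff_infinite.mpr (Set.infinite_coe_iff.mp hv))
  have hdecr : StrictAnti (pathWeight w p ∘ φ) := fun _ _ hkl =>
    pathWeight_lt_of_eq hneg hp (hφ hkl) ((hφv _).trans (hφv _).symm)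
  obtain ⟨k, hk⟩ := hdecr.exists_lt M
  exact ⟨φ k, hk⟩
end

section
/- Let G = (V, E, w) be a finite weighted directed graph with integer weights where every vertex has out-degree at least one, and let x ∈ ℕ. Suppose there exists an infinite path (v₀, v₁, v₂, …) starting at v₀ such that for all n ∈ ℕ, x + Σ_{i=0}^{n-1} w(v_i, v_{i+1}) ≥ 0. Then the path contains a vertex v_m and an index m such that the energy level never drops below its level at step m afterwards; formally, there exists m ∈ ℕ such that for all n ≥ m, Σ_{i=m}^{n-1} w(v_i, v_{i+1}) ≥ 0. -/
/-! The energy levels `x + ∑_{i<n} w(vᵢ, vᵢ₊₁)` are integers bounded below by `0`, so one of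
them, at step `m`, is minimal; the energy gained from step `m` to any later step is a difference
of two levels, the first of them minimal, hence non-negative. -/

theorem exists_forall_le_of_bddBelow_range {f : ℕ → ℤ} (hf : BddBelow (Set.range f)) :
    ∃ m, ∀ n, f m ≤ f n := by
  obtain ⟨m, hm⟩ := Int.csInf_mem (Set.range_nonempty f) hf
  exact ⟨m, fun n => hm ▸ csInf_le hf ⟨n, rfl⟩⟩

theorem exists_forall_sum_Ico_nonneg_of_bddBelow (a : ℕ → ℤ)
    (ha : BddBelow (Set.range fun n => ∑ i ∈ Finset.range n, a i)) :
    ∃ m, ∀ n, m ≤ n → 0 ≤ ∑ i ∈ Finset.Ico m n, a i := by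
  obtain ⟨m, hm⟩ := exists_forall_le_of_bddBelow_range ha
  refine ⟨m, fun n hmn => ?_⟩
  rw [Finset.sum_Ico_eq_sub _ hmn, sub_nonneg]
  exact hm n

theorem stmt_5_general {V : Type*} (w : V → V → ℤ) (x : ℕ) (p : ℕ → V)
    (hx : ∀ n : ℕ, 0 ≤ (x : ℤ) + ∑ i ∈ Finset.range n, w (p i) (p (i + 1))) :
    ∃ m : ℕ, ∀ n : ℕ, m ≤ n →
      0 ≤ ∑ i ∈ Finset.Ico m n, w (p i) (p (i + 1)) := by
  refine exists_forall_sum_Ico_nonneg_of_bddBelow _ ⟨-x, ?_⟩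
  rintro _ ⟨n, rfl⟩
  linarith [hx n]

/-- along an infinite path whose prefix sums plus an initial
energy `x` stay non-negative, there is a moment `m` after which the energy
level never drops below its level at step `m`. -/
theorem stmt_5 {V : Type*} [Fintype V] (E : V → V → Prop) (w : V → V → ℤ)
    (hE : ∀ v : V, ∃ u, E v u) (x : ℕ)
    (p : ℕ → V) (hp : ∀ i, E (p i) (p (i + 1)))
    (hx : ∀ n : ℕ, 0 ≤ (x : ℤ) + ∑ i ∈ Finset.range n, w (p i) (p (i + 1))) :
    ∃ m : ℕ, ∀ n : ℕ, m ≤ n →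
      0 ≤ ∑ i ∈ Finset.Ico m n, w (p i) (p (i + 1)) :=
  stmt_5_general w x p hx
end

section
/- Let G = (V, E, w) be a finite weighted directed graph with integer weights where every vertex has out-degree at least one, and let b ∈ ℕ. Say an infinite path (v₀, v₁, …) is b-feasible with initial energy x ∈ ℕ if for all n ∈ ℕ, x + Σ_{i=0}^{n-1} w(v_i, v_{i+1}) ≥ 0, and additionally for all n₁ < n₂, Σ_{i=n₁}^{n₂−1} w(v_i, v_{i+1}) ≥ −b. Then the following are equivalent for an infinite path p and x ≤ b: (1) p is b-feasible with initial energy x; (2) the truncated energy sequence defined by e₀ = x and e_{n+1} = min(b, e_n + w(v_n, v_{n+1})) satisfies e_n ≥ 0 for all n ∈ ℕ. -/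
private lemma inf'_add_right {ι : Type*} (s : Finset ι) (hs : s.Nonempty) (f : ι → ℤ) (a : ℤ) :
    s.inf' hs f + a = s.inf' hs (fun i => f i + a) := by
  induction hs using Finset.Nonempty.cons_induction with
  | singleton i => simp
  | cons i s hi hs' ih =>
      rw [Finset.inf'_cons (H := hs'), Finset.inf'_cons (H := hs'), ← ih]
      exact (min_add_add_right (f i) _ a).symm

private def gfun {V : Type*} (w : V → V → ℤ) (p : ℕ → V) (b x : ℕ) : ℕ → ℕ → ℤ
  | 0, n => (x : ℤ) + ∑ i ∈ Finset.range n, w (p i) (p (i + 1))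
  | (k + 1), n => (b : ℤ) + ∑ i ∈ Finset.Ico (k + 1) n, w (p i) (p (i + 1))

/-- equivalence between the "no prefix below 0 and no segment below
`-b`" formulation and the truncated-energy formulation, for `x ≤ b`. -/
theorem stmt_9 {V : Type*} [Fintype V] (E : V → V → Prop) (w : V → V → ℤ)
    (hE : ∀ v : V, ∃ u, E v u) (b x : ℕ) (hxb : x ≤ b)
    (p : ℕ → V) (hp : ∀ i, E (p i) (p (i + 1)))
    (e : ℕ → ℤ) (he0 : e 0 = (x : ℤ))
    (he : ∀ n : ℕ, e (n + 1) = min (b : ℤ) (e n + w (p n) (p (n + 1)))) :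
    ((∀ n : ℕ, 0 ≤ (x : ℤ) + ∑ i ∈ Finset.range n, w (p i) (p (i + 1))) ∧
      (∀ n₁ n₂ : ℕ, n₁ < n₂ →
        -(b : ℤ) ≤ ∑ i ∈ Finset.Ico n₁ n₂, w (p i) (p (i + 1)))) ↔
    (∀ n : ℕ, 0 ≤ e n) := by
  set g : ℕ → ℕ → ℤ := gfun w p b x with hg
  have hne : ∀ n : ℕ, (Finset.range (n + 1)).Nonempty := fun n => ⟨0, by simp⟩
  have key : ∀ n : ℕ, e n = (Finset.range (n + 1)).inf' (hne n) (fun k => g k n) := by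
    intro n
    induction n with
    | zero => simp [he0, hg, gfun]
    | succ n ih =>
        rw [he n, ih, inf'_add_right]
        have h1 : ∀ k ∈ Finset.range (n + 1),
            g k n + w (p n) (p (n + 1)) = g k (n + 1) := by
          intro k hk
          match k with
          | 0 => simp only [hg, gfun]; rw [Finset.sum_range_succ]; ring
          | (j + 1) =>
              simp only [hg, gfun]
              rw [Finset.sum_Ico_succ_top (Nat.lt_succ_iff.mp (Finset.mem_range.mp hk))]
              ring
        rw [Finset.inf'_congr (hne n) rfl h1]
        have hb : g (n + 1) (n + 1) = (b : ℤ) := by simp [hg, gfun]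
        simp only [Finset.range_add_one (n := n + 1)]
        rw [Finset.inf'_insert (H := hne n) (f := fun k => g k (n + 1))]
        simp [hb]
  constructor
  · rintro ⟨h1, h2⟩ n
    rw [key n]
    apply Finset.le_inf'
    intro k hk
    match k with
    | 0 => simpa [hg, gfun] using h1 n
    | (j + 1) =>
        rcases lt_or_ge (j + 1) n with hkn | hkn
        · have := h2 (j + 1) n hkn
          simp only [hg, gfun]
          linarith
        · have hempty : Finset.Ico (j + 1) n = ∅ := Finset.Ico_eq_empty (not_lt.mpr hkn)
          simp only [hg, gfun, hempty, Finset.sum_empty, add_zero]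
          positivity
  · intro h
    constructor
    · intro n
      have h0 := h n
      rw [key n] at h0
      have h3 : (0 : ℤ) ≤ g 0 n :=
        le_trans h0 (Finset.inf'_le (f := fun k => g k n) (Finset.mem_range.mpr (Nat.succ_pos n)))
      simpa [hg, gfun] using h3
    · intro n₁ n₂ hlt
      have h0 := h n₂
      rw [key n₂] at h0
      have hmem : n₁ ∈ Finset.range (n₂ + 1) := Finset.mem_range.mpr (by omega)
      have h3 : (0 : ℤ) ≤ g n₁ n₂ :=
        le_trans h0 (Finset.inf'_le (f := fun k => g k n₂) hmem)
      match n₁, hlt with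
      | 0, hlt =>
          simp only [hg, gfun] at h3
          have hxb' : (x : ℤ) ≤ (b : ℤ) := by exact_mod_cast hxb
          rw [← Finset.range_eq_Ico]
          linarith
      | (j + 1), hlt =>
          simp only [hg, gfun] at h3
          linarith
end

section
/- With F the value iteration operator for a mean-payoff game Γ and bound b ∈ ℕ as above, starting from d₀ = 0 and iterating d_{k+1} = F(d_k): for each v ∈ V and k ∈ ℕ, d_k(v) (when finite) equals the minimum amount x ∈ ℕ of initial energy such that Max has a strategy ensuring that in every k-step play from v, for all n ≤ k, x + Σ_{i=0}^{n-1} w(v_i, v_{i+1}) ≥ 0 and no segment of the play of length at most k has weight less than −b. -/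
/-!
The energy condition and value iteration obey the same one-step recursion. Max can ensure the
`(k + 1)`-step condition from `v` with initial energy `z` iff `0 ≤ z` and, after the first move
`v ⟶ u` (one `u` of his choice at a Max vertex, every `u` at a Min vertex), he can ensure the
`k`-step condition from `u` with energy `min z b + w v u`: the prefix sums through `u` need
`z + w v u + ⋯ ≥ 0` and the segments starting at `v` need `b + w v u + ⋯ ≥ 0`. One step of value
iteration, `max 0 (d u - w v u)` capped at `b`, is exactly this recursion read on thresholds, so
by induction on `k`, `d_k(v) ≤ z` iff Max can ensure the `k`-step condition with energy `z`.
-/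

/-- One value-iteration step for the lower-weak-upper-bound problem. Values
live in `WithTop ℤ` (with `⊤` playing the role of `∞`); `max 0 (d u - w v u)`
is written with addition of `-(w v u)` so that `⊤` absorbs correctly, and the
result is set to `⊤` whenever the computed value exceeds `b`. -/
noncomputable def viStep {V : Type*} [Fintype V] [DecidableEq V]
    (E : V → V → Prop) [DecidableRel E] (w : V → V → ℤ) (b : ℕ)
    (VMax : Finset V) (hE : ∀ v : V, ∃ u, E v u)
    (d : V → WithTop ℤ) (v : V) : WithTop ℤ :=
  let s : Finset V := Finset.univ.filter (fun u => E v u)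
  have hs : s.Nonempty := by
    obtain ⟨u, hu⟩ := hE v
    exact ⟨u, by simp [s, hu]⟩
  let x : WithTop ℤ :=
    if v ∈ VMax then
      s.inf' hs (fun u => max 0 (d u + ((-(w v u) : ℤ) : WithTop ℤ)))
    else
      s.sup' hs (fun u => max 0 (d u + ((-(w v u) : ℤ) : WithTop ℤ)))
  if x ≤ ((b : ℤ) : WithTop ℤ) then x else ⊤

/-- The value iteration sequence starting from the all-zero vector. -/
noncomputable def viSeq {V : Type*} [Fintype V] [DecidableEq V]
    (E : V → V → Prop) [DecidableRel E] (w : V → V → ℤ) (b : ℕ)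
    (VMax : Finset V) (hE : ∀ v : V, ∃ u, E v u) : ℕ → V → WithTop ℤ
  | 0 => fun _ => 0
  | k + 1 => viStep E w b VMax hE (viSeq E w b VMax hE k)

/-- Max has a (history-dependent) strategy ensuring that every `k`-step play
from `v` keeps `x` plus all prefix sums non-negative and has no segment of
weight below `-b`. -/
def EnsuresSteps {V : Type*} [Fintype V] [DecidableEq V]
    (E : V → V → Prop) (w : V → V → ℤ) (b : ℕ) (VMax : Finset V)
    (k : ℕ) (v : V) (x : ℕ) : Prop :=
  ∃ σ : List V → V,
    (∀ (l : List V) (u : V), l.getLast? = some u → u ∈ VMax → E u (σ l)) ∧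
    ∀ p : ℕ → V, p 0 = v → (∀ i < k, E (p i) (p (i + 1))) →
      (∀ i < k, p i ∈ VMax →
        p (i + 1) = σ (List.ofFn (fun j : Fin (i + 1) => p j))) →
      ((∀ n ≤ k, 0 ≤ (x : ℤ) + ∑ i ∈ Finset.range n, w (p i) (p (i + 1))) ∧
        ∀ n₁ n₂ : ℕ, n₁ < n₂ → n₂ ≤ k →
          -(b : ℤ) ≤ ∑ i ∈ Finset.Ico n₁ n₂, w (p i) (p (i + 1)))

def seqCons {α : Type*} (a : α) (s : ℕ → α) : ℕ → α
  | 0 => a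
  | i + 1 => s i

theorem WithTop.max_zero_add_neg_le_coe_iff {d : WithTop ℤ} {a c : ℤ} :
    max 0 (d + ((-a : ℤ) : WithTop ℤ)) ≤ c ↔ 0 ≤ c ∧ d ≤ ((c + a : ℤ) : WithTop ℤ) := by
  induction d using WithTop.recTopCoe with
  | top => simp
  | coe d =>
    norm_cast
    omega

theorem WithTop.ite_self_top_le_coe_iff {α : Type*} [LinearOrder α] {x : WithTop α} {c z : α} :
    (if x ≤ (c : WithTop α) then x else ⊤) ≤ (z : WithTop α) ↔ x ≤ ((min z c : α) : WithTop α) := by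
  split_ifs with hx
  · rw [WithTop.coe_min, le_min_iff]
    exact ⟨fun h => ⟨h, hx⟩, And.left⟩
  · simp only [top_le_iff, WithTop.coe_ne_top, false_iff]
    exact fun h => hx (h.trans (WithTop.coe_le_coe.mpr (min_le_right z c)))

section EnergyGame

variable {V : Type*} (E : V → V → Prop) (VMax : Finset V) (w : V → V → ℤ) (b : ℕ)

def IsStrategy (σ : List V → V) : Prop :=
  ∀ (l : List V) (u : V), l.getLast? = some u → u ∈ VMax → E u (σ l)

def IsPlay (σ : List V → V) (k : ℕ) (v : V) (p : ℕ → V) : Prop :=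
  p 0 = v ∧ (∀ i < k, E (p i) (p (i + 1))) ∧
    ∀ i < k, p i ∈ VMax → p (i + 1) = σ (List.ofFn fun j : Fin (i + 1) => p j)

def IsSafe (k : ℕ) (z : ℤ) (p : ℕ → V) : Prop :=
  (∀ n ≤ k, 0 ≤ z + ∑ i ∈ Finset.range n, w (p i) (p (i + 1))) ∧
    ∀ n₁ n₂ : ℕ, n₁ < n₂ → n₂ ≤ k → -(b : ℤ) ≤ ∑ i ∈ Finset.Ico n₁ n₂, w (p i) (p (i + 1))

/-- Unlike in `EnsuresSteps`, the initial energy is an integer, so that the energy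
`min z b + w v u` that is left after a first step `v ⟶ u` needs no truncation. -/
def CanEnsure (k : ℕ) (v : V) (z : ℤ) : Prop :=
  ∃ σ, IsStrategy E VMax σ ∧ ∀ p, IsPlay E VMax σ k v p → IsSafe w b k z p

variable {E VMax w b}

theorem exists_isStrategy (hE : ∀ v, ∃ u, E v u) (v : V) : ∃ σ, IsStrategy E VMax σ :=
  ⟨fun l => (hE (l.getLastD v)).choose, fun l u hl _ => by
    simpa [List.getLastD_eq_getLast?, hl] using (hE (l.getLastD v)).choose_spec⟩

theorem IsStrategy.update [DecidableEq V] {σ : List V → V} (hσ : IsStrategy E VMax σ)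
    {v u : V} (hvu : E v u) :
    IsStrategy E VMax (Function.update σ [v] u) := by
  intro l a hl ha
  by_cases hlv : l = [v]
  · subst hlv
    simp_all
  · simpa [hlv] using hσ l a hl ha

theorem IsStrategy.cons {σ : List V → V} (hσ : IsStrategy E VMax σ) (v : V) :
    IsStrategy E VMax fun l => σ (v :: l) := by
  intro l u hl hu
  refine hσ _ u ?_ hu
  cases l <;> simp_all

theorem isPlay_succ_iff {σ : List V → V} {k : ℕ} {v : V} {p : ℕ → V} :
    IsPlay E VMax σ (k + 1) v p ↔
      p 0 = v ∧ E v (p 1) ∧ (v ∈ VMax → p 1 = σ [v]) ∧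
        IsPlay E VMax (fun l => σ (v :: l)) k (p 1) fun i => p (i + 1) := by
  simp only [IsPlay, Nat.forall_lt_succ_left, List.ofFn_succ, Fin.val_succ]
  constructor
  · rintro ⟨rfl, ⟨he0, he⟩, hc0, hc⟩
    exact ⟨rfl, he0, by simpa using hc0, trivial, he, hc⟩
  · rintro ⟨rfl, he0, hc0, -, he, hc⟩
    exact ⟨rfl, ⟨he0, he⟩, by simpa using hc0, hc⟩

theorem IsPlay.congr {σ τ : List V → V} {k : ℕ} {u : V} {q : ℕ → V}
    (hq : IsPlay E VMax σ k u q) (hστ : ∀ l, σ (u :: l) = τ (u :: l)) :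
    IsPlay E VMax τ k u q := by
  obtain ⟨h0, he, hc⟩ := hq
  refine ⟨h0, he, fun i hi hmem => ?_⟩
  rw [hc i hi hmem, List.ofFn_succ, Fin.val_zero, h0, hστ]

theorem exists_isPlay (hE : ∀ v, ∃ u, E v u) {σ : List V → V} (hσ : IsStrategy E VMax σ)
    (k : ℕ) (v : V) : ∃ p, IsPlay E VMax σ k v p := by
  classical
  induction k generalizing σ v with
  | zero => exact ⟨fun _ => v, rfl, by simp, by simp⟩
  | succ k ih =>
    let u := if v ∈ VMax then σ [v] else (hE v).choose
    have hvu : E v u := by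
      by_cases hv : v ∈ VMax
      · simpa [u, hv] using hσ [v] v rfl hv
      · simpa [u, hv] using (hE v).choose_spec
    obtain ⟨q, hq⟩ := ih (hσ.cons v) u
    refine ⟨seqCons v q, isPlay_succ_iff.mpr ⟨rfl, ?_, fun hv => ?_, ?_⟩⟩
    · simpa [seqCons, hq.1] using hvu
    · simp [seqCons, hq.1, u, hv]
    · simpa [seqCons, hq.1] using hq

theorem isSafe_succ_iff {k : ℕ} {z : ℤ} {p : ℕ → V} :
    IsSafe w b (k + 1) z p ↔
      0 ≤ z ∧ IsSafe w b k (min z b + w (p 0) (p 1)) fun i => p (i + 1) := by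
  have hshift : ∀ n₁ n₂, ∑ i ∈ Finset.Ico (n₁ + 1) (n₂ + 1), w (p i) (p (i + 1)) =
      ∑ i ∈ Finset.Ico n₁ n₂, w (p (i + 1)) (p (i + 1 + 1)) := fun n₁ n₂ =>
    (Finset.sum_Ico_add' (fun i => w (p i) (p (i + 1))) n₁ n₂ 1).symm
  have hprefix : ∀ n, ∑ i ∈ Finset.range (n + 1), w (p i) (p (i + 1)) =
      ∑ i ∈ Finset.range n, w (p (i + 1)) (p (i + 1 + 1)) + w (p 0) (p 1) := fun n =>
    Finset.sum_range_succ' _ n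
  simp only [IsSafe]
  constructor
  · rintro ⟨hpre, hseg⟩
    refine ⟨by simpa using hpre 0 (Nat.zero_le _), fun n hn => ?_, fun n₁ n₂ h12 hn₂ => ?_⟩
    · have h₁ := hpre (n + 1) (by omega)
      have h₂ := hseg 0 (n + 1) (by omega) (by omega)
      rw [← Finset.range_eq_Ico] at h₂
      rw [hprefix] at h₁ h₂
      omega
    · simpa only [hshift] using hseg (n₁ + 1) (n₂ + 1) (by omega) (by omega)
  · rintro ⟨hz, hpre, hseg⟩
    refine ⟨fun n hn => ?_, fun n₁ n₂ h12 hn₂ => ?_⟩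
    · cases n with
      | zero => simpa using hz
      | succ n =>
        have := hpre n (by omega)
        rw [hprefix]
        omega
    · obtain ⟨n₂, rfl⟩ := Nat.exists_eq_add_of_lt h12
      cases n₁ with
      | zero =>
        have := hpre n₂ (by omega)
        rw [zero_add, ← Finset.range_eq_Ico, hprefix]
        omega
      | succ n₁ =>
        rw [show n₁ + 1 + n₂ + 1 = n₁ + n₂ + 1 + 1 by omega, hshift]
        exact hseg n₁ (n₁ + n₂ + 1) (by omega) (by omega)

def switchStrategy (σ₁ : List V → V) (τ : V → List V → V) : List V → V
  | _ :: c :: l => τ c (c :: l)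
  | l => σ₁ l

theorem IsStrategy.switch {σ₁ : List V → V} {τ : V → List V → V}
    (hσ₁ : IsStrategy E VMax σ₁) (hτ : ∀ u, IsStrategy E VMax (τ u)) :
    IsStrategy E VMax (switchStrategy σ₁ τ) := by
  rintro (_ | ⟨a, _ | ⟨c, l⟩⟩) u hl hu
  · exact hσ₁ _ u hl hu
  · exact hσ₁ _ u hl hu
  · exact hτ c (c :: l) u (by simpa using hl) hu

theorem canEnsure_succ_of {σ₁ : List V → V} (hσ₁ : IsStrategy E VMax σ₁) {k : ℕ} {v : V} {z : ℤ}
    (hz : 0 ≤ z)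
    (h : ∀ u, E v u → (v ∈ VMax → u = σ₁ [v]) → CanEnsure E VMax w b k u (min z b + w v u)) :
    CanEnsure E VMax w b (k + 1) v z := by
  have hchoice : ∀ u, ∃ τ, IsStrategy E VMax τ ∧ (E v u → (v ∈ VMax → u = σ₁ [v]) →
      ∀ q, IsPlay E VMax τ k u q → IsSafe w b k (min z b + w v u) q) := by
    intro u
    by_cases hu : E v u ∧ (v ∈ VMax → u = σ₁ [v])
    · obtain ⟨τ, hτ, hsafe⟩ := h u hu.1 hu.2
      exact ⟨τ, hτ, fun _ _ => hsafe⟩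
    · exact ⟨σ₁, hσ₁, fun h₁ h₂ => absurd ⟨h₁, h₂⟩ hu⟩
  choose τ hτ hsafe using hchoice
  refine ⟨switchStrategy σ₁ τ, hσ₁.switch hτ, fun p hp => ?_⟩
  obtain ⟨rfl, hvu, hfirst, htail⟩ := isPlay_succ_iff.mp hp
  exact isSafe_succ_iff.mpr ⟨hz, hsafe _ hvu hfirst _ (htail.congr fun _ => rfl)⟩

theorem canEnsure_succ_iff [DecidableEq V] (hE : ∀ v, ∃ u, E v u) {k : ℕ} {v : V} {z : ℤ} :
    CanEnsure E VMax w b (k + 1) v z ↔ 0 ≤ z ∧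
      if v ∈ VMax then ∃ u, E v u ∧ CanEnsure E VMax w b k u (min z b + w v u)
      else ∀ u, E v u → CanEnsure E VMax w b k u (min z b + w v u) := by
  constructor
  · rintro ⟨σ, hσ, hsafe⟩
    have htail : ∀ u, E v u → (v ∈ VMax → u = σ [v]) →
        CanEnsure E VMax w b k u (min z b + w v u) := by
      intro u hvu hfirst
      refine ⟨_, hσ.cons v, fun q hq => ?_⟩
      have hq0 := hq.1
      subst hq0
      exact (isSafe_succ_iff.mp (hsafe (seqCons v q)
        (isPlay_succ_iff.mpr ⟨rfl, hvu, hfirst, hq⟩))).2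
    obtain ⟨p, hp⟩ := exists_isPlay hE hσ (k + 1) v
    refine ⟨(isSafe_succ_iff.mp (hsafe p hp)).1, ?_⟩
    split_ifs with hv
    · exact ⟨σ [v], hσ [v] v rfl hv, htail _ (hσ [v] v rfl hv) fun _ => rfl⟩
    · exact fun u hvu => htail u hvu fun hv' => absurd hv' hv
  · rintro ⟨hz, h⟩
    obtain ⟨σ₀, hσ₀⟩ := exists_isStrategy hE v
    split_ifs at h with hv
    · obtain ⟨u, hvu, hu⟩ := h
      refine canEnsure_succ_of (hσ₀.update hvu) hz fun u' _ hu' => ?_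
      rw [hu' hv, Function.update_self]
      exact hu
    · exact canEnsure_succ_of hσ₀ hz fun u hvu _ => h u hvu

theorem canEnsure_zero_iff (hE : ∀ v, ∃ u, E v u) {v : V} {z : ℤ} :
    CanEnsure E VMax w b 0 v z ↔ 0 ≤ z := by
  constructor
  · rintro ⟨σ, hσ, hsafe⟩
    obtain ⟨p, hp⟩ := exists_isPlay hE hσ 0 v
    simpa using (hsafe p hp).1 0 le_rfl
  · intro hz
    obtain ⟨σ, hσ⟩ := exists_isStrategy hE v
    refine ⟨σ, hσ, fun p _ => ⟨fun n hn => ?_, fun n₁ n₂ h12 hn₂ => by omega⟩⟩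
    simpa [Nat.le_zero.mp hn] using hz

theorem viStep_le_coe_iff [Fintype V] [DecidableEq V] [DecidableRel E]
    (hE : ∀ v, ∃ u, E v u) (d : V → WithTop ℤ) (v : V) (z : ℤ) :
    viStep E w b VMax hE d v ≤ (z : WithTop ℤ) ↔ 0 ≤ z ∧
      if v ∈ VMax then ∃ u, E v u ∧ d u ≤ ((min z b + w v u : ℤ) : WithTop ℤ)
      else ∀ u, E v u → d u ≤ ((min z b + w v u : ℤ) : WithTop ℤ) := by
  have hzb : 0 ≤ min z b ↔ 0 ≤ z := by omega
  obtain ⟨u₀, hu₀⟩ := hE v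
  unfold viStep
  simp only [WithTop.ite_self_top_le_coe_iff]
  split_ifs with hv
  · simp only [Finset.inf'_le_iff, Finset.mem_filter, Finset.mem_univ, true_and,
      WithTop.max_zero_add_neg_le_coe_iff, hzb]
    exact ⟨fun ⟨u, hu, hz, hd⟩ => ⟨hz, u, hu, hd⟩, fun ⟨hz, u, hu, hd⟩ => ⟨u, hu, hz, hd⟩⟩
  · simp only [Finset.sup'_le_iff, Finset.mem_filter, Finset.mem_univ, true_and,
      WithTop.max_zero_add_neg_le_coe_iff, hzb]
    exact ⟨fun h => ⟨(h u₀ hu₀).1, fun u hu => (h u hu).2⟩, fun ⟨hz, h⟩ u hu => ⟨hz, h u hu⟩⟩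

theorem canEnsure_iff_viSeq_le [Fintype V] [DecidableEq V] [DecidableRel E]
    (hE : ∀ v, ∃ u, E v u) (k : ℕ) (v : V) (z : ℤ) :
    CanEnsure E VMax w b k v z ↔ viSeq E w b VMax hE k v ≤ (z : WithTop ℤ) := by
  induction k generalizing v z with
  | zero => simp [canEnsure_zero_iff hE, viSeq]
  | succ k ih => simp only [canEnsure_succ_iff hE, viSeq, viStep_le_coe_iff, ih]

theorem ensuresSteps_iff_canEnsure [Fintype V] [DecidableEq V] {k : ℕ} {v : V} {x : ℕ} :
    EnsuresSteps E w b VMax k v x ↔ CanEnsure E VMax w b k v x := by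
  simp only [EnsuresSteps, CanEnsure, IsStrategy, IsPlay, IsSafe, and_imp]

end EnergyGame

/-- whenever `d_k(v)` is finite, it is the minimum initial energy
with which Max can ensure the `k`-step energy condition from `v`. -/
theorem stmt_13 {V : Type*} [Fintype V] [DecidableEq V]
    (E : V → V → Prop) [DecidableRel E] (w : V → V → ℤ) (b : ℕ)
    (VMax : Finset V) (hE : ∀ v : V, ∃ u, E v u)
    (k : ℕ) (v : V) (x : ℕ)
    (hfin : viSeq E w b VMax hE k v = ((x : ℤ) : WithTop ℤ)) :
    IsLeast {y : ℕ | EnsuresSteps E w b VMax k v y} x := by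
  have hmem : ∀ y : ℕ, EnsuresSteps E w b VMax k v y ↔ x ≤ y := fun y => by
    rw [ensuresSteps_iff_canEnsure, canEnsure_iff_viSeq_le hE, hfin]
    norm_cast
  exact ⟨(hmem x).mpr le_rfl, fun y hy => (hmem y).mp hy⟩
end

section
/- Let G = (V, E, w) be a finite weighted directed graph with integer weights where every vertex has out-degree at least one (one-player game for Max). If there exists an infinite path from v ∈ V keeping x + (prefix sums) ≥ 0 for some x ∈ ℕ, then the minimal such x satisfies x ≤ (|V| − 1) · W, where W is the maximum absolute edge weight. Consequently, the minimal sufficient initial energy at any vertex of a one-player reachability-free energy game is either ∞ or at most (|V| − 1) · W. -/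
/-- Initial energy `x` suffices at `v` in the one-player energy game. -/
def Suffices' {V : Type*} (E : V → V → Prop) (w : V → V → ℤ)
    (v : V) (x : ℕ) : Prop :=
  ∃ p : ℕ → V, p 0 = v ∧ (∀ i, E (p i) (p (i + 1))) ∧
    ∀ n : ℕ, 0 ≤ (x : ℤ) + ∑ i ∈ Finset.range n, w (p i) (p (i + 1))

private def psum {V : Type*} (w : V → V → ℤ) (p : ℕ → V) (n : ℕ) : ℤ :=
  ∑ i ∈ Finset.range n, w (p i) (p (i + 1))

private lemma psum_succ {V : Type*} (w : V → V → ℤ) (p : ℕ → V) (n : ℕ) :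
    psum w p (n + 1) = psum w p n + w (p n) (p (n + 1)) :=
  Finset.sum_range_succ _ _

private lemma psum_zero {V : Type*} (w : V → V → ℤ) (p : ℕ → V) :
    psum w p 0 = 0 :=
  Finset.sum_range_zero _

private lemma key {V : Type*} [Fintype V] (E : V → V → Prop) (w : V → V → ℤ)
    (W : ℕ) (hW : ∀ x y, E x y → (w x y).natAbs ≤ W) (v : V) :
    ∀ k : ℕ, ∀ p : ℕ → V, p 0 = v → (∀ i, E (p i) (p (i + 1))) →
      (∀ n, -(k : ℤ) ≤ psum w p n) →
      Suffices' E w v ((Fintype.card V - 1) * W) := by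
  intro k
  induction k using Nat.strong_induction_on with
  | _ k IH =>
  intro p hp0 hedge hsum
  set N := Fintype.card V with hN
  by_cases hkX : k ≤ (N - 1) * W
  · refine ⟨p, hp0, hedge, fun n => ?_⟩
    have h1 := hsum n
    have h2 : (k : ℤ) ≤ (((N - 1) * W : ℕ) : ℤ) := by exact_mod_cast hkX
    have : (0 : ℤ) ≤ (((N - 1) * W : ℕ) : ℤ) + psum w p n := by linarith
    exact this
  · push_neg at hkX
    by_cases hall : ∀ n, -((k : ℤ) - 1) ≤ psum w p n
    · exact IH (k - 1) (by omega) p hp0 hedge (fun n => by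
        have := hall n
        have hc : ((k - 1 : ℕ) : ℤ) = (k : ℤ) - 1 := by omega
        rw [hc]; exact this)
    · push_neg at hall
      obtain ⟨nbad, hnbad⟩ := hall
      have hk1 : 1 ≤ k := by omega
      -- the least index where the prefix sum hits -k
      have hQ : ∃ m, psum w p m ≤ -(k : ℤ) := ⟨nbad, by omega⟩
      set n₀ := Nat.find hQ with hn₀def
      have hn₀ : psum w p n₀ = -(k : ℤ) := le_antisymm (Nat.find_spec hQ) (hsum n₀)
      have hmin : ∀ m, m < n₀ → -(k : ℤ) + 1 ≤ psum w p m := by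
        intro m hm
        have := Nat.find_min hQ hm
        omega
      -- step bound
      have hstepW : ∀ i, psum w p i - W ≤ psum w p (i + 1) := by
        intro i
        have h1 := hW _ _ (hedge i)
        have h2 := psum_succ w p i
        omega
      -- findGreatest construction
      set g : ℕ → ℕ := fun j =>
        Nat.findGreatest (fun m => -((j : ℤ) * W) ≤ psum w p m) n₀ with hgdef
      have hg0 : ∀ j : ℕ, -((j : ℤ) * W) ≤ psum w p (g j) := by
        intro j
        have h0 : -((j : ℤ) * W) ≤ psum w p 0 := by
          rw [psum_zero]
          have : (0 : ℤ) ≤ (j : ℤ) * W := by positivity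
          linarith
        exact Nat.findGreatest_spec (P := fun m => -((j : ℤ) * W) ≤ psum w p m) (Nat.zero_le n₀) h0
      have hglt : ∀ j, j < N → g j < n₀ := by
        intro j hj
        refine lt_of_le_of_ne (Nat.findGreatest_le _) ?_
        intro he
        have h1 := hg0 j
        rw [he, hn₀] at h1
        have hjW : ((j : ℤ) * W) ≤ (((N - 1) * W : ℕ) : ℤ) := by
          have : (j * W : ℕ) ≤ (N - 1) * W := Nat.mul_le_mul_right _ (by omega)
          exact_mod_cast this
        have hXk : (((N - 1) * W : ℕ) : ℤ) < (k : ℤ) := by exact_mod_cast hkX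
        linarith
      have hgstep : ∀ j, j < N → g j < g (j + 1) := by
        intro j hj
        have h1 : g j + 1 ≤ n₀ := hglt j hj
        refine Nat.le_findGreatest h1 ?_
        have h2 := hstepW (g j)
        have h3 := hg0 j
        push_cast
        linarith
      have hgm : ∀ j l, j < l → l < N → g j < g l := by
        intro j l hjl hlN
        induction l with
        | zero => omega
        | succ l ih =>
          rcases Nat.lt_succ_iff_lt_or_eq.mp hjl with h | h
          · exact lt_trans (ih h (by omega)) (hgstep l (by omega))
          · subst h; exact hgstep j (by omega)
      have hSless : ∀ j m, g j < m → m ≤ n₀ → psum w p m < -((j : ℤ) * W) := by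
        intro j m h1 h2
        have := Nat.findGreatest_is_greatest h1 h2
        exact lt_of_not_ge this
      -- indices
      set idx : ℕ → ℕ := fun j => if j < N then g j else n₀ with hidxdef
      have hidxle : ∀ j, idx j ≤ n₀ := by
        intro j
        by_cases h : j < N
        · simp only [hidxdef, if_pos h]
          exact Nat.findGreatest_le _
        · simp [hidxdef, if_neg h]
      have hidxmono : ∀ j l, j < l → l ≤ N → idx j < idx l := by
        intro j l hjl hlN
        have hj : j < N := by omega
        by_cases h : l < N
        · simp only [hidxdef, if_pos h, if_pos hj]
          exact hgm j l hjl h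
        · have : l = N := by omega
          simp only [hidxdef, if_neg h, if_pos hj]
          exact hglt j hj
      have hSdec : ∀ j l, j < l → l ≤ N → psum w p (idx l) < psum w p (idx j) := by
        intro j l hjl hlN
        have hj : j < N := by omega
        have h1 : psum w p (idx l) < -((j : ℤ) * W) := by
          refine hSless j (idx l) ?_ (hidxle l)
          have := hidxmono j l hjl hlN
          simpa [hidxdef, if_pos hj] using this
        have h2 := hg0 j
        have : idx j = g j := by simp [hidxdef, if_pos hj]
        rw [this]
        linarith
      -- pigeonhole
      have hcard : Fintype.card V < Fintype.card (Fin (N + 1)) := by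
        simp [hN]
      obtain ⟨j, l, hne, heq⟩ :=
        Fintype.exists_ne_map_eq_of_card_lt (fun j : Fin (N + 1) => p (idx j)) hcard
      obtain ⟨a, b, hab, han, hba, hpeq⟩ :
          ∃ a b : ℕ, a < b ∧ a < n₀ ∧ psum w p b < psum w p a ∧ p a = p b := by
        rcases hne.lt_or_gt with h | h
        · have hjl : (j : ℕ) < (l : ℕ) := h
          have hlN : (l : ℕ) ≤ N := by omega
          have hjN : (j : ℕ) < N := by omega
          refine ⟨idx j, idx l, hidxmono _ _ hjl hlN, ?_, hSdec _ _ hjl hlN, heq⟩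
          have : idx (j : ℕ) = g j := by simp [hidxdef, if_pos hjN]
          rw [this]; exact hglt _ hjN
        · have hjl : (l : ℕ) < (j : ℕ) := h
          have hlN : (j : ℕ) ≤ N := by omega
          have hjN : (l : ℕ) < N := by omega
          refine ⟨idx l, idx j, hidxmono _ _ hjl hlN, ?_, hSdec _ _ hjl hlN, heq.symm⟩
          have : idx (l : ℕ) = g l := by simp [hidxdef, if_pos hjN]
          rw [this]; exact hglt _ hjN
      -- surgery: cut out the cycle from a to b
      set q : ℕ → V := fun i => if i < a then p i else p (i + (b - a)) with hqdef
      have hqval : ∀ i, i ≤ a → q i = p i := by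
        intro i hi
        by_cases h : i < a
        · simp [hqdef, h]
        · have hia : i = a := by omega
          have hb : i + (b - a) = b := by omega
          simp only [hqdef, if_neg h, hb]
          rw [hia, hpeq]
      have hqge : ∀ i, a ≤ i → q i = p (i + (b - a)) := by
        intro i hi
        simp [hqdef, Nat.not_lt.mpr hi]
      have hq0 : q 0 = v := by rw [hqval 0 (Nat.zero_le a), hp0]
      have hqedge : ∀ i, E (q i) (q (i + 1)) := by
        intro i
        by_cases h : i + 1 ≤ a
        · rw [hqval i (by omega), hqval (i + 1) h]
          exact hedge i
        · have hai : a ≤ i := by omega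
          rw [hqge i hai, hqge (i + 1) (by omega)]
          have : i + 1 + (b - a) = (i + (b - a)) + 1 := by omega
          rw [this]
          exact hedge _
      -- prefix sums of q
      have hL1 : ∀ m, m ≤ a → psum w q m = psum w p m := by
        intro m hm
        unfold psum
        refine Finset.sum_congr rfl ?_
        intro i hi
        have hi' : i < m := Finset.mem_range.mp hi
        rw [hqval i (by omega), hqval (i + 1) (by omega)]
      have hL2 : ∀ m, psum w q (a + m) = psum w p a + (psum w p (b + m) - psum w p b) := by
        intro m
        induction m with
        | zero =>
          rw [Nat.add_zero, Nat.add_zero, hL1 a le_rfl]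
          ring
        | succ m ih =>
          have h1 : a + (m + 1) = (a + m) + 1 := by omega
          rw [h1, psum_succ, ih]
          have h2 : q (a + m) = p (b + m) := by
            rw [hqge (a + m) (by omega)]
            congr 1
            omega
          have h3 : q (a + m + 1) = p (b + m + 1) := by
            rw [hqge (a + m + 1) (by omega)]
            congr 1
            omega
          rw [h2, h3]
          have h4 : psum w p (b + (m + 1)) = psum w p (b + m) + w (p (b + m)) (p (b + m + 1)) := by
            have : b + (m + 1) = (b + m) + 1 := by omega
            rw [this, psum_succ]
          rw [h4]
          ring
      have hbound : ∀ m, -(k : ℤ) + 1 ≤ psum w q m := by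
        intro m
        by_cases hm : m ≤ a
        · rw [hL1 m hm]
          exact hmin m (by omega)
        · have : m = a + (m - a) := by omega
          rw [this, hL2 (m - a)]
          have h1 := hsum (b + (m - a))
          omega
      exact IH (k - 1) (by omega) q hq0 hqedge (fun n => by
        have := hbound n
        have hc : ((k - 1 : ℕ) : ℤ) = (k : ℤ) - 1 := by omega
        rw [hc]; linarith)

/-- in a one-player energy game, if some finite initial energy
suffices at `v`, then the minimal sufficient initial energy is at most
`(|V| - 1) * W`. -/
theorem stmt_15 {V : Type*} [Fintype V] (E : V → V → Prop) (w : V → V → ℤ)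
    (hE : ∀ v : V, ∃ u, E v u)
    (W : ℕ) (hW : ∀ x y, E x y → (w x y).natAbs ≤ W)
    (v : V) (h : ∃ x : ℕ, Suffices' E w v x) :
    sInf {x : ℕ | Suffices' E w v x} ≤ (Fintype.card V - 1) * W := by
  obtain ⟨x, p, hp0, hedge, hsum⟩ := h
  have hkey := key E w W hW v x p hp0 hedge (fun n => by
    have := hsum n
    unfold psum
    linarith)
  exact Nat.sInf_le hkey
end

section
/- Let G = (V, E, w) be a finite weighted directed graph with integer weights where every vertex has out-degree at least one (one-player energy game for Max), and let B = {v ∈ V : there is an infinite path from v with all prefix sums ≥ 0 (initial energy 0 suffices)}. Then for every v ∈ V \ B from which B is reachable, the minimal sufficient initial energy at v equals the absolute value of the maximal weight over all paths from v to B; and if B is not reachable from v, then no finite initial energy suffices at v. -/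
/-- A path from `v` to `B`: last vertex and only the last vertex lies in `B`. -/
def IsPathTo {V : Type*} (E : V → V → Prop) (B : Set V) (v : V)
    (k : ℕ) (q : ℕ → V) : Prop :=
  q 0 = v ∧ (∀ i < k, E (q i) (q (i + 1))) ∧ (∀ i < k, q i ∉ B) ∧ q k ∈ B

/-!
Let `B` be the set of vertices where energy `0` suffices. On a path `q` from `v` to `B` the
total weight is the least prefix weight: from a prefix minimum `q m`, the rest of the path
followed by a nonnegative infinite path from `B` has nonnegative prefix sums, so `q m ∈ B`,
and `m` is the endpoint. Hence energy `x` suffices along such a path as soon as `x` covers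
its total weight. Conversely, an infinite path with prefix sums bounded
below by `-x` passes, at a prefix minimum, through `B`, and the part of it before its first
visit to `B` is a path to `B` of weight at least `-x`. So energy `x` suffices at `v` iff some
path from `v` to `B` has weight at least `-x`; for `v ∉ B` all these weights are negative.
-/

open Finset

def walkWeight {V : Type*} (w : V → V → ℤ) (q : ℕ → V) (n : ℕ) : ℤ :=
  ∑ i ∈ range n, w (q i) (q (i + 1))

lemma ENat.sInf_setOf_natCast_of_iff {P : ℕ → Prop} {a : ℕ} (h : ∀ n, P n ↔ a ≤ n) :
    sInf {x : ℕ∞ | ∃ n : ℕ, x = n ∧ P n} = a :=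
  le_antisymm (sInf_le ⟨a, rfl, (h a).2 le_rfl⟩)
    (le_sInf <| by rintro _ ⟨n, rfl, hn⟩; exact_mod_cast (h n).1 hn)

section EnergyGame

variable {V : Type*} {E : V → V → Prop} {w : V → V → ℤ}

lemma walkWeight_add (q : ℕ → V) (m n : ℕ) :
    walkWeight w q (m + n) = walkWeight w q m + walkWeight w (fun j => q (m + j)) n := by
  simpa [walkWeight, Nat.add_assoc] using sum_range_add (fun i => w (q i) (q (i + 1))) m n

lemma walkWeight_succ' (q : ℕ → V) (n : ℕ) :
    walkWeight w q (n + 1) = w (q 0) (q 1) + walkWeight w (fun j => q (j + 1)) n := by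
  rw [walkWeight, sum_range_succ', add_comm]
  rfl

lemma Suffices'.mono {v : V} {x y : ℕ} (h : Suffices' E w v x) (hxy : x ≤ y) :
    Suffices' E w v y := by
  obtain ⟨p, hp0, hp, hps⟩ := h
  exact ⟨p, hp0, hp, fun n => by linarith [hps n, (Nat.cast_le (α := ℤ)).2 hxy]⟩

lemma Suffices'.cons {u v : V} {x y : ℕ} (hvu : E v u) (hu : Suffices' E w u y)
    (hy : (y : ℤ) ≤ x + w v u) : Suffices' E w v x := by
  obtain ⟨p, hp0, hp, hps⟩ := hu
  let r : ℕ → V := fun n => Nat.casesOn n v p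
  refine ⟨r, rfl, ?_, ?_⟩
  · rintro (_ | i)
    · simpa [r, hp0] using hvu
    · exact hp i
  · rintro (_ | n)
    · simp
    · rw [sum_range_succ']
      change 0 ≤ (x : ℤ) + (∑ i ∈ range n, w (p i) (p (i + 1)) + w v (p 0))
      linarith [hps n, hp0 ▸ hy]

lemma suffices_of_walk {v : V} {x : ℕ} (k : ℕ) {q : ℕ → V} (hq0 : q 0 = v)
    (hq : ∀ i < k, E (q i) (q (i + 1))) (hk : Suffices' E w (q k) 0)
    (hx : ∀ n ≤ k, 0 ≤ x + walkWeight w q n) : Suffices' E w v x := by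
  induction k generalizing v x q with
  | zero => exact hq0 ▸ hk.mono (Nat.zero_le x)
  | succ k ih =>
    subst hq0
    have hstep : 0 ≤ (x : ℤ) + w (q 0) (q 1) := by
      simpa [walkWeight] using hx 1 (by omega)
    refine Suffices'.cons (y := (x + w (q 0) (q 1)).toNat) (hq 0 (by omega)) ?_
      (by rw [Int.toNat_of_nonneg hstep])
    refine ih rfl (fun i hi => hq (i + 1) (by omega)) hk fun n hn => ?_
    rw [Int.toNat_of_nonneg hstep, add_assoc, ← walkWeight_succ']
    exact hx (n + 1) (by omega)

lemma IsPathTo.walkWeight_le {v : V} {k : ℕ} {q : ℕ → V}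
    (hq : IsPathTo E {u | Suffices' E w u 0} v k q) {n : ℕ} (hn : n ≤ k) :
    walkWeight w q k ≤ walkWeight w q n := by
  obtain ⟨-, hedge, hout, hk⟩ := hq
  obtain ⟨m, hm, hmin⟩ :=
    (range (k + 1)).exists_min_image (walkWeight w q) nonempty_range_add_one
  have hmk : m ≤ k := Nat.lt_succ_iff.mp (mem_range.mp hm)
  have hmB : Suffices' E w (q m) 0 := by
    refine suffices_of_walk (k - m) (q := fun j => q (m + j)) rfl (fun i hi => ?_) ?_
      fun j hj => ?_
    · simpa [Nat.add_assoc] using hedge (m + i) (by omega)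
    · simpa [Nat.add_sub_cancel' hmk] using hk
    · linarith [walkWeight_add (w := w) q m j, hmin (m + j) (mem_range.mpr (by omega))]
  obtain rfl : m = k := by
    by_contra hne
    exact hout m (by omega) hmB
  exact hmin n (mem_range.mpr (by omega))

lemma suffices_of_isPathTo {v : V} {x k : ℕ} {q : ℕ → V}
    (hq : IsPathTo E {u | Suffices' E w u 0} v k q) (hx : 0 ≤ x + walkWeight w q k) :
    Suffices' E w v x :=
  suffices_of_walk k hq.1 hq.2.1 hq.2.2.2 fun _ hn => by linarith [hq.walkWeight_le hn]

lemma exists_isPathTo_of_suffices {v : V} {x : ℕ} (h : Suffices' E w v x) :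
    ∃ k q, IsPathTo E {u | Suffices' E w u 0} v k q ∧ 0 ≤ x + walkWeight w q k := by
  classical
  obtain ⟨p, hp0, hp, hps⟩ := h
  obtain ⟨_, ⟨m, rfl⟩, hmin⟩ := Int.exists_least_of_bdd
    (P := fun z => ∃ n, walkWeight w p n = z)
    ⟨-x, by
      rintro _ ⟨n, rfl⟩
      linarith [show 0 ≤ (x : ℤ) + walkWeight w p n from hps n]⟩
    ⟨_, 0, rfl⟩
  have hB : ∃ m, Suffices' E w (p m) 0 := by
    refine ⟨m, fun j => p (m + j), rfl, fun i => by simpa [Nat.add_assoc] using hp (m + i),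
      fun n => ?_⟩
    change 0 ≤ ((0 : ℕ) : ℤ) + walkWeight w (fun j => p (m + j)) n
    linarith [walkWeight_add (w := w) p m n, hmin _ ⟨m + n, rfl⟩]
  exact ⟨Nat.find hB, p, ⟨hp0, fun i _ => hp i, fun i hi => Nat.find_min hB hi,
    Nat.find_spec hB⟩, hps _⟩

end EnergyGame

theorem stmt_16_general {V : Type*} (E : V → V → Prop) (w : V → V → ℤ) :
    ∀ v ∉ {u : V | Suffices' E w u 0},
      ((∃ (k : ℕ) (q : ℕ → V), IsPathTo E {u : V | Suffices' E w u 0} v k q) →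
        sInf {x : ℕ∞ | ∃ n : ℕ, x = (n : ℕ∞) ∧ Suffices' E w v n} =
          (((sSup {s : ℤ | ∃ (k : ℕ) (q : ℕ → V),
              IsPathTo E {u : V | Suffices' E w u 0} v k q ∧
              s = ∑ i ∈ Finset.range k, w (q i) (q (i + 1))}).natAbs : ℕ) : ℕ∞)) ∧
      ((¬ ∃ (k : ℕ) (q : ℕ → V),
          IsPathTo E {u : V | Suffices' E w u 0} v k q) →
        ∀ n : ℕ, ¬ Suffices' E w v n) := by
  intro v hv
  refine ⟨fun ⟨k, q, hq⟩ => ?_, fun hunreach n hn => ?_⟩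
  · set S : Set ℤ := {s | ∃ k q, IsPathTo E {u | Suffices' E w u 0} v k q ∧
      s = ∑ i ∈ range k, w (q i) (q (i + 1))}
    have hneg : ∀ s ∈ S, s < 0 := by
      rintro _ ⟨k, q, hq, rfl⟩
      by_contra! h
      exact hv (suffices_of_isPathTo hq (by simpa [walkWeight] using h))
    have hbdd : BddAbove S := ⟨0, fun s hs => (hneg s hs).le⟩
    have hmax := Int.csSup_mem (s := S) ⟨_, k, q, hq, rfl⟩ hbdd
    have hsup_neg := hneg _ hmax
    obtain ⟨kmax, qmax, hqmax, hsup⟩ := hmax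
    refine ENat.sInf_setOf_natCast_of_iff fun n => ⟨fun hn => ?_, fun hn => ?_⟩
    · obtain ⟨k', q', hq', hx⟩ := exists_isPathTo_of_suffices hn
      have := le_csSup hbdd ⟨k', q', hq', rfl⟩
      simp only [walkWeight] at hx
      omega
    · exact suffices_of_isPathTo hqmax (by simp only [walkWeight]; omega)
  · obtain ⟨k, q, hq, -⟩ := exists_isPathTo_of_suffices hn
    exact hunreach ⟨k, q, hq⟩

/-- let `B` be the set of vertices where initial energy `0`
suffices. For `v ∉ B`: if `B` is reachable from `v`, the minimal sufficient
initial energy at `v` equals the absolute value of the maximal weight of a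
path from `v` to `B`; if `B` is unreachable from `v`, no finite initial
energy suffices. -/
theorem stmt_16 {V : Type*} [Fintype V] (E : V → V → Prop) (w : V → V → ℤ)
    (hE : ∀ v : V, ∃ u, E v u) :
    ∀ v ∉ {u : V | Suffices' E w u 0},
      ((∃ (k : ℕ) (q : ℕ → V), IsPathTo E {u : V | Suffices' E w u 0} v k q) →
        sInf {x : ℕ∞ | ∃ n : ℕ, x = (n : ℕ∞) ∧ Suffices' E w v n} =
          (((sSup {s : ℤ | ∃ (k : ℕ) (q : ℕ → V),
              IsPathTo E {u : V | Suffices' E w u 0} v k q ∧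
              s = ∑ i ∈ Finset.range k, w (q i) (q (i + 1))}).natAbs : ℕ) : ℕ∞)) ∧
      ((¬ ∃ (k : ℕ) (q : ℕ → V),
          IsPathTo E {u : V | Suffices' E w u 0} v k q) →
        ∀ n : ℕ, ¬ Suffices' E w v n) :=
  stmt_16_general E w
end

section
/- Let G = (V, E, w) be a finite weighted directed graph with integer weights where every vertex has out-degree at least one. Define B = {v ∈ V : initial energy 0 suffices at v, i.e., there is an infinite path from v with all prefix sums ≥ 0}. Then B is nonempty if and only if G contains a cycle of non-negative weight. Moreover, if v lies on a cycle of non-negative weight, then by starting the traversal of the cycle at a vertex of the cycle where the running partial sum (from v around the cycle) attains its minimum, one obtains a vertex in B; in particular, every non-negative cycle contains a vertex belonging to B. -/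
private lemma cycle_part {V : Type*} (E : V → V → Prop) (w : V → V → ℤ)
    (k : ℕ) (q : ℕ → V) (hk : 1 ≤ k) (hq : ∀ i < k, E (q i) (q (i + 1)))
    (hcl : q k = q 0) (hw : 0 ≤ ∑ i ∈ Finset.range k, w (q i) (q (i + 1))) :
    ∃ i ≤ k, Suffices' E w (q i) 0 := by
  have hk0 : 0 < k := hk
  set r : ℕ → V := fun n => q (n % k) with hr
  set f : ℕ → ℤ := fun i => w (r i) (r (i + 1)) with hf
  set S : ℕ → ℤ := fun n => ∑ i ∈ Finset.range n, f i with hS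
  have hmod : ∀ n : ℕ, (n + 1) % k = (n % k + 1) % k := by
    intro n
    conv_lhs => rw [show n + 1 = (n % k + 1) + k * (n / k) by
      have := Nat.mod_add_div n k; omega]
    rw [Nat.add_mul_mod_self_left]
  have key : ∀ n, r (n + 1) = q (n % k + 1) := by
    intro n
    have h1 : n % k < k := Nat.mod_lt _ hk0
    show q ((n + 1) % k) = q (n % k + 1)
    rw [hmod]
    rcases Nat.lt_or_ge (n % k + 1) k with h | h
    · rw [Nat.mod_eq_of_lt h]
    · have h' : n % k + 1 = k := by omega
      rw [h', Nat.mod_self]; exact hcl.symm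
  have hEr : ∀ n, E (r n) (r (n + 1)) := by
    intro n
    rw [key]
    exact hq _ (Nat.mod_lt _ hk0)
  have hfper : ∀ n, f (n + k) = f n := by
    intro n
    show w (r (n + k)) (r (n + k + 1)) = w (r n) (r (n + 1))
    have h1 : r (n + k) = r n := by
      show q ((n + k) % k) = q (n % k); rw [Nat.add_mod_right]
    have h2 : r (n + k + 1) = r (n + 1) := by
      rw [key, key]
      congr 1
      rw [Nat.add_mod_right]
    rw [h1, h2]
  have hWnn : 0 ≤ S k := by
    have : S k = ∑ i ∈ Finset.range k, w (q i) (q (i + 1)) := by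
      apply Finset.sum_congr rfl
      intro i hi
      rw [Finset.mem_range] at hi
      show w (r i) (r (i + 1)) = _
      rw [key]
      have : i % k = i := Nat.mod_eq_of_lt hi
      rw [this]
      congr 1
      show q (i % k) = q i
      rw [this]
    rw [this]; exact hw
  have hSper : ∀ n, S (n + k) = S n + S k := by
    intro n
    induction n with
    | zero => simp [hS]
    | succ n ih =>
      have e1 : n + 1 + k = (n + k) + 1 := by omega
      rw [e1]
      show ∑ i ∈ Finset.range ((n + k) + 1), f i = _
      rw [Finset.sum_range_succ]
      have : ∑ i ∈ Finset.range (n + k), f i = S n + S k := ih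
      rw [this, hfper]
      show S n + S k + f n = S (n + 1) + S k
      have : S (n + 1) = S n + f n := Finset.sum_range_succ f n
      rw [this]; ring
  obtain ⟨m, hmk, hmin⟩ := Finset.exists_min_image (Finset.range k) S
    ⟨0, Finset.mem_range.mpr hk0⟩
  rw [Finset.mem_range] at hmk
  have hlow : ∀ j, S m ≤ S j := by
    intro j
    induction j using Nat.strong_induction_on with
    | _ j ih =>
      rcases Nat.lt_or_ge j k with h | h
      · exact hmin j (Finset.mem_range.mpr h)
      · obtain ⟨j', rfl⟩ : ∃ j', j = j' + k := ⟨j - k, by omega⟩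
        calc S m ≤ S j' := ih j' (by omega)
          _ ≤ S j' + S k := le_add_of_nonneg_right hWnn
          _ = S (j' + k) := (hSper j').symm
  refine ⟨m, le_of_lt hmk, fun n => r (m + n), ?_, fun i => hEr (m + i), ?_⟩
  · show q ((m + 0) % k) = q m
    rw [Nat.add_zero, Nat.mod_eq_of_lt hmk]
  · intro n
    have hsum : ∑ i ∈ Finset.range n, w (r (m + i)) (r (m + i + 1))
        = S (m + n) - S m := by
      have h1 : S (m + n) = S m + ∑ i ∈ Finset.range n, f (m + i) :=
        Finset.sum_range_add f m n
      have h2 : ∑ i ∈ Finset.range n, f (m + i)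
          = ∑ i ∈ Finset.range n, w (r (m + i)) (r (m + i + 1)) := rfl
      rw [← h2]
      omega
    have h3 : ∑ i ∈ Finset.range n, w (r (m + i)) (r (m + (i + 1)))
        = S (m + n) - S m := by
      rw [← hsum]
      apply Finset.sum_congr rfl
      intro i _
      congr 1
    push_cast
    rw [zero_add]
    calc (0 : ℤ) ≤ S (m + n) - S m := by have := hlow (m + n); omega
      _ = ∑ i ∈ Finset.range n, w (r (m + i)) (r (m + (i + 1))) := h3.symm

/-- the set `B = {v | energy 0 suffices at v}` is nonempty iff
the graph has a cycle of non-negative weight; moreover every non-negative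
cycle contains a vertex of `B`. -/
theorem stmt_17 {V : Type*} [Fintype V] (E : V → V → Prop) (w : V → V → ℤ)
    (hE : ∀ v : V, ∃ u, E v u) :
    ((∃ v : V, Suffices' E w v 0) ↔
      ∃ (k : ℕ) (q : ℕ → V), 1 ≤ k ∧ (∀ i < k, E (q i) (q (i + 1))) ∧
        q k = q 0 ∧ 0 ≤ ∑ i ∈ Finset.range k, w (q i) (q (i + 1))) ∧
    (∀ (k : ℕ) (q : ℕ → V), 1 ≤ k → (∀ i < k, E (q i) (q (i + 1))) →
      q k = q 0 → 0 ≤ ∑ i ∈ Finset.range k, w (q i) (q (i + 1)) →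
      ∃ i ≤ k, Suffices' E w (q i) 0) := by
  constructor
  · constructor
    · rintro ⟨v, p, hp0, hpE, hpS⟩
      set S : ℕ → ℤ := fun n => ∑ i ∈ Finset.range n, w (p i) (p (i + 1)) with hSdef
      have hS0 : ∀ n, 0 ≤ S n := by
        intro n; simpa using hpS n
      -- pigeonhole: some vertex occurs infinitely often
      obtain ⟨u, hu⟩ := Finite.exists_infinite_fiber p
      have hT : (p ⁻¹' {u}).Infinite := Set.infinite_coe_iff.mp hu
      -- least value of S on the fiber
      obtain ⟨lb, ⟨i, hiT, hiS⟩, hlb⟩ := Int.exists_least_of_bdd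
        (P := fun z => ∃ n, p n = u ∧ S n = z)
        ⟨0, by rintro z ⟨n, -, rfl⟩; exact hS0 n⟩
        (by obtain ⟨n, hn⟩ := hT.nonempty; exact ⟨S n, n, hn, rfl⟩)
      obtain ⟨j, hjT, hij⟩ := hT.exists_gt i
      refine ⟨j - i, fun n => p (i + n), by omega, fun n _ => hpE (i + n), ?_, ?_⟩
      · show p (i + (j - i)) = p (i + 0)
        rw [Nat.add_zero, show i + (j - i) = j by omega, hjT, hiT]
      · have h1 : ∑ n ∈ Finset.range (j - i), w (p (i + n)) (p (i + n + 1))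
            = S j - S i := by
          have h0 : S (i + (j - i)) = S i +
              ∑ n ∈ Finset.range (j - i), w (p (i + n)) (p (i + n + 1)) :=
            Finset.sum_range_add (fun n => w (p n) (p (n + 1))) i (j - i)
          rw [show i + (j - i) = j by omega] at h0
          omega
        have h2 : ∑ n ∈ Finset.range (j - i), w (p (i + n)) (p (i + (n + 1)))
            = S j - S i := by
          rw [← h1]; apply Finset.sum_congr rfl; intro n _; congr 1
        rw [h2]
        have := hlb (S j) ⟨j, hjT, rfl⟩
        omega
    · rintro ⟨k, q, hk, hq, hcl, hw⟩
      obtain ⟨i, -, hi⟩ := cycle_part E w k q hk hq hcl hw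
      exact ⟨q i, hi⟩
  · exact fun k q hk hq hcl hw => cycle_part E w k q hk hq hcl hw
end
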